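/- arXiv:1408.5838 — 3 statements merged into one kernel-verified Lean document; each statement's English description precedes it below -/
import Mathlib

section
/- Let (W,S) be a Coxeter system with automorphism σ preserving S. Let O be a σ-conjugacy class of W, w, w' ∈ W with w' = s w σ(s) for some s ∈ S and ℓ(w') = ℓ(w) ± 0 or less (i.e., w →_σ w' in one step). If there exists a minimal length element x of O with x ≤ w', then there exists a minimal length element y of O with y ≤ w (Bruhat order). -/
/-!
Write `s = s_i`, `t = σ(s) = s_j` and `w' = s w t`. If `ℓ(s w) < ℓ(w)`, the lifting property of
the Bruhat order applied to `x ≤ w'` and `t` gives `x ≤ w' t = s w`, or `x t < x` and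
`x t ≤ s w`; multiplying by `s` on the left yields `x ≤ w` or `s x t ≤ w`, and `s x t` is a
σ-conjugate of `x` of length at most `ℓ(x)`, hence again of minimal length. The case
`ℓ(w t) < ℓ(w)` is symmetric, and if `s w > w` and `w t > w` then `ℓ(w') ≤ ℓ(w)` forces
`w' = w`.

Since `bruhatLE` asks for a subword of *some* reduced word, the lifting property needs the subword
property for *every* word. This goes through the chain description of the Bruhat order and the
strong exchange condition, which in turn comes from the reflection cocycle: the parity of the
number of occurrences of `t` in the inversion sequence of a word depends only on its product.
-/

/-- Bruhat order on a Coxeter group (subword property). -/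
def CoxeterSystem.bruhatLE {B W : Type*} [Group W] {M : CoxeterMatrix B}
    (cs : CoxeterSystem M W) (x w : W) : Prop :=
  ∃ ω : List B, cs.wordProd ω = w ∧ cs.IsReduced ω ∧
    ∃ ω' : List B, ω'.Sublist ω ∧ cs.wordProd ω' = x

/-- `y` is a σ-conjugate of `x`. -/
def sigmaConj {W : Type*} [Group W] (σ : W ≃* W) (y x : W) : Prop :=
  ∃ g : W, y = g * x * (σ g)⁻¹

/-- `x` is of minimal length in the σ-conjugacy class of `o`. -/
def minLenIn {B W : Type*} [Group W] {M : CoxeterMatrix B} (cs : CoxeterSystem M W)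
    (σ : W ≃* W) (o x : W) : Prop :=
  sigmaConj σ x o ∧ ∀ y : W, sigmaConj σ y o → cs.length x ≤ cs.length y

namespace CoxeterSystem

open List

open scoped Classical

variable {B W : Type*} [Group W] {M : CoxeterMatrix B} (cs : CoxeterSystem M W)

local prefix:100 "s " => cs.simple
local prefix:100 "π " => cs.wordProd
local prefix:100 "ℓ " => cs.length
local prefix:100 "ris " => cs.rightInvSeq

noncomputable def simpleParityPerm (i : B) : Equiv.Perm (W × ZMod 2) :=
  Function.Involutive.toPerm (fun p => (s i * p.1 * s i, p.2 + if p.1 = s i then 1 else 0)) <| by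
    rintro ⟨a, ε⟩
    ext
    · simp [← mul_assoc]
    · by_cases ha : a = s i
      · simp [ha, add_assoc, CharTwo.add_self_eq_zero]
      · simp [ha, mul_eq_one_iff_inv_eq, Ne.symm ha]

theorem simpleParityPerm_apply (i : B) (a : W) (ε : ZMod 2) :
    cs.simpleParityPerm i (a, ε) = (s i * a * s i, ε + if a = s i then 1 else 0) := rfl

theorem simple_mul_mul_simple_eq_iff (i : B) (a b : W) :
    s i * a * s i = b ↔ a = s i * b * s i := by
  constructor <;> rintro rfl <;> simp [mul_assoc]

theorem pow_simpleParityPerm_mul_apply (i j : B) (k : ℕ) (a : W) (ε : ZMod 2) :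
    ((cs.simpleParityPerm i * cs.simpleParityPerm j) ^ k) (a, ε) =
      (((s j * s i) ^ k)⁻¹ * a * (s j * s i) ^ k,
        ε + ∑ e ∈ Finset.range (2 * k), if a = (s j * s i) ^ e * s j then 1 else 0) := by
  induction k generalizing a ε with
  | zero => simp
  | succ k ih =>
    have h1 : s j * a * s j = s i ↔ a = (s j * s i) ^ 1 * s j := by
      rw [simple_mul_mul_simple_eq_iff, pow_one, mul_assoc]
    have h2 (e : ℕ) : s i * (s j * a * s j) * s i = (s j * s i) ^ e * s j ↔
        a = (s j * s i) ^ (e + 2) * s j := by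
      rw [simple_mul_mul_simple_eq_iff, simple_mul_mul_simple_eq_iff, pow_succ', pow_succ]
      simp only [mul_assoc]
    rw [pow_succ, Equiv.Perm.mul_apply, Equiv.Perm.mul_apply, simpleParityPerm_apply,
      simpleParityPerm_apply, ih, mul_add, Finset.sum_range_succ' _ (2 * k + 1),
      Finset.sum_range_succ']
    simp only [h1, h2]
    ext
    · simp only [pow_succ', mul_inv_rev, inv_simple, mul_assoc]
    · simp only [pow_zero, one_mul]
      ring

theorem isLiftable_simpleParityPerm : M.IsLiftable cs.simpleParityPerm := by
  intro i j
  ext ⟨a, ε⟩ : 1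
  have hr : (s j * s i) ^ M i j = 1 := cs.simple_mul_simple_pow' i j
  rw [pow_simpleParityPerm_mul_apply, hr, two_mul, Finset.sum_range_add]
  simp [pow_add, hr, CharTwo.add_self_eq_zero]

-- Acting on `W × ZMod 2` is what makes the parity of the occurrences of `t` in the inversion
-- sequence of a word a function of its product (`inversionParity_wordProd`).
noncomputable def parityRep : W →* Equiv.Perm (W × ZMod 2) :=
  cs.lift ⟨cs.simpleParityPerm, cs.isLiftable_simpleParityPerm⟩

theorem parityRep_wordProd (ω : List B) (a : W) (ε : ZMod 2) :
    cs.parityRep (π ω) (a, ε) = (π ω * a * (π ω)⁻¹, ε + (ris ω).count a) := by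
  induction ω generalizing ε with
  | nil => simp
  | cons i ω ih =>
    have hlift : cs.parityRep (s i) = cs.simpleParityPerm i := cs.lift_apply_simple _ i
    have hcond : π ω * a * (π ω)⁻¹ = s i ↔ (π ω)⁻¹ * s i * π ω = a := by
      constructor
      · intro h
        rw [← h]
        group
      · rintro rfl
        group
    rw [wordProd_cons, map_mul, Equiv.Perm.mul_apply, ih, hlift, simpleParityPerm_apply]
    ext
    · simp [mul_assoc]
    · simp only [rightInvSeq, count_cons, hcond, beq_iff_eq]
      push_cast
      ring

noncomputable def inversionParity (w t : W) : ZMod 2 := (cs.parityRep w (t, 0)).2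

theorem inversionParity_wordProd (ω : List B) (t : W) :
    cs.inversionParity (π ω) t = (ris ω).count t := by
  simp [inversionParity, parityRep_wordProd]

theorem parityRep_apply (w a : W) (ε : ZMod 2) :
    cs.parityRep w (a, ε) = (w * a * w⁻¹, ε + cs.inversionParity w a) := by
  obtain ⟨ω, -, rfl⟩ := cs.exists_isReduced w
  rw [parityRep_wordProd, inversionParity_wordProd]

theorem inversionParity_mul (u v a : W) :
    cs.inversionParity (u * v) a =
      cs.inversionParity v a + cs.inversionParity u (v * a * v⁻¹) := by
  rw [inversionParity, map_mul, Equiv.Perm.mul_apply, parityRep_apply, parityRep_apply, zero_add]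

theorem inversionParity_simple_self (i : B) : cs.inversionParity (s i) (s i) = 1 := by
  simpa using cs.inversionParity_wordProd [i] (s i)

theorem inversionParity_self {t : W} (ht : cs.IsReflection t) : cs.inversionParity t t = 1 := by
  obtain ⟨u, i, rfl⟩ := ht
  have hinv : cs.inversionParity u⁻¹ (u * s i * u⁻¹) = cs.inversionParity u (s i) := by
    have h := cs.inversionParity_mul u⁻¹ u (s i)
    rw [inv_mul_cancel, inversionParity, map_one, Equiv.Perm.one_apply] at h
    exact (CharTwo.add_eq_zero.mp h.symm).symm
  have hs : u⁻¹ * (u * s i * u⁻¹) * u⁻¹⁻¹ = s i := by group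
  rw [inversionParity_mul, hinv, inversionParity_mul, hs, inversionParity_simple_self,
    inv_simple, simple_mul_simple_cancel_right, add_left_comm,
    CharTwo.add_self_eq_zero, add_zero]

theorem mem_rightInvSeq_of_inversionParity_eq_one {ω : List B} {t : W}
    (h : cs.inversionParity (π ω) t = 1) : t ∈ ris ω := by
  rw [inversionParity_wordProd] at h
  refine count_pos_iff.mp (Nat.pos_of_ne_zero fun h0 => ?_)
  simp [h0] at h

theorem length_mul_lt_of_inversionParity_eq_one {w t : W} (h : cs.inversionParity w t = 1) :
    ℓ (w * t) < ℓ w := by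
  obtain ⟨ω, hω, rfl⟩ := cs.exists_isReduced w
  exact (cs.isRightInversion_of_mem_rightInvSeq hω
    (cs.mem_rightInvSeq_of_inversionParity_eq_one h)).2

theorem inversionParity_eq_one_iff {w t : W} (ht : cs.IsReflection t) :
    cs.inversionParity w t = 1 ↔ ℓ (w * t) < ℓ w := by
  refine ⟨cs.length_mul_lt_of_inversionParity_eq_one, fun hlt => ?_⟩
  have hw : w * t * t = w := by rw [mul_assoc, ht.mul_self, mul_one]
  have hwt : cs.inversionParity (w * t) t ≠ 1 := fun h => by
    have := cs.length_mul_lt_of_inversionParity_eq_one h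
    rw [hw] at this
    omega
  have htt : t * t * t⁻¹ = t := by rw [ht.mul_self, one_mul, ht.inv]
  rw [← hw, inversionParity_mul, htt, inversionParity_self cs ht]
  generalize cs.inversionParity (w * t) t = x at hwt
  revert x
  decide

theorem exists_sublist_wordProd_eq_mul {ω : List B} {t : W} (ht : cs.IsReflection t)
    (h : ℓ (π ω * t) < ℓ (π ω)) : ∃ ω', ω' <+ ω ∧ π ω' = π ω * t := by
  have hmem :=
    cs.mem_rightInvSeq_of_inversionParity_eq_one ((cs.inversionParity_eq_one_iff ht).mpr h)
  obtain ⟨k, hk, rfl⟩ := getElem_of_mem hmem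
  refine ⟨ω.eraseIdx k, eraseIdx_sublist _ _, ?_⟩
  rw [← getD_eq_getElem _ 1, wordProd_mul_getD_rightInvSeq]

theorem length_mul_lt_or_of_length_mul_mul_lt {u v t : W} (ht : cs.IsReflection t)
    (h : ℓ (u * v * t) < ℓ (u * v)) :
    ℓ (v * t) < ℓ v ∨ ℓ (u * (v * t * v⁻¹)) < ℓ u := by
  rw [← cs.inversionParity_eq_one_iff ht, inversionParity_mul] at h
  rw [← cs.inversionParity_eq_one_iff ht, ← cs.inversionParity_eq_one_iff (ht.conj v)]
  generalize cs.inversionParity v t = x, cs.inversionParity u (v * t * v⁻¹) = y at h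
  revert x y
  decide

-- The usual definition of the Bruhat order.
def ReflectionChain (x w : W) : Prop :=
  Relation.ReflTransGen (fun u v => ∃ t, cs.IsReflection t ∧ u * t = v ∧ ℓ u < ℓ v) x w

variable {cs} in
theorem ReflectionChain.exists_sublist {x w : W} (h : cs.ReflectionChain x w) {ω : List B}
    (hω : π ω = w) : ∃ χ, χ <+ ω ∧ π χ = x := by
  induction h generalizing ω with
  | refl => exact ⟨ω, Sublist.refl ω, hω⟩
  | @tail u _ _ hstep ih =>
    obtain ⟨t, ht, rfl, hlt⟩ := hstep
    have hu : π ω * t = u := by rw [hω, mul_assoc, ht.mul_self, mul_one]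
    obtain ⟨ω', hω', hπ⟩ :=
      cs.exists_sublist_wordProd_eq_mul ht (ω := ω) (by rwa [hu, hω])
    obtain ⟨χ, hχ, rfl⟩ := ih (hπ.trans hu)
    exact ⟨χ, hχ.trans hω', rfl⟩

theorem eq_simple_of_length_mul_mul_simple_lt {u t : W} {j : B} (ht : cs.IsReflection t)
    (hu : ℓ u < ℓ (u * t)) (h : ℓ (u * t * s j) < ℓ (u * s j)) : t = s j := by
  have ht' : cs.IsReflection (s j * t * s j) := by simpa using ht.conj (s j)
  rcases cs.length_mul_lt_or_of_length_mul_mul_lt ht' (u := u) (v := s j)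
    (by simpa [mul_assoc] using h) with h' | h'
  · have : ℓ (t * s j) = 0 := by simpa [← mul_assoc] using h'
    rw [length_eq_zero_iff, mul_eq_one_iff_eq_inv, inv_simple] at this
    exact this
  · simp [← mul_assoc] at h'
    omega

variable {cs} in
theorem ReflectionChain.mul_simple_or {x v : W} (h : cs.ReflectionChain x v) (j : B) :
    cs.ReflectionChain (x * s j) v ∨ cs.ReflectionChain (x * s j) (v * s j) := by
  induction h with
  | refl => exact Or.inr .refl
  | @tail u _ _ hstep ih =>
    obtain ⟨t, ht, rfl, hlt⟩ := hstep
    rcases ih with h | h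
    · exact Or.inl (h.tail ⟨t, ht, rfl, hlt⟩)
    have ht' : cs.IsReflection (s j * t * s j) := by simpa using ht.conj (s j)
    have hconj : u * s j * (s j * t * s j) = u * t * s j := by simp [mul_assoc]
    rcases lt_or_gt_of_ne (ht'.length_mul_left_ne (u * s j)) with hc | hc <;>
      rw [hconj] at hc
    · rw [cs.eq_simple_of_length_mul_mul_simple_lt ht hlt hc]
      exact Or.inl h
    · exact Or.inr (h.tail ⟨_, ht', hconj, hc⟩)

theorem reflectionChain_wordProd_of_sublist {ω χ : List B} (hω : cs.IsReduced ω)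
    (hχ : χ <+ ω) : cs.ReflectionChain (π χ) (π ω) := by
  induction ω using reverseRecOn generalizing χ with
  | nil =>
    rw [sublist_nil.mp hχ]
    exact .refl
  | append_singleton ω j ih =>
    have hω' : cs.IsReduced ω := by simpa using hω.take ω.length
    have hlt : ℓ (π ω) < ℓ (π (ω ++ [j])) := by
      rw [hω.eq, hω'.eq, length_append, length_singleton]
      omega
    have hstep : cs.ReflectionChain (π ω) (π (ω ++ [j])) :=
      .single ⟨s j, cs.isReflection_simple j, by simp [wordProd_append], hlt⟩
    obtain ⟨χ₁, χ₂, rfl, hχ₁, hχ₂⟩ := sublist_append_iff.mp hχ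
    rcases sublist_singleton.mp hχ₂ with rfl | rfl
    · rw [append_nil]
      exact (ih hω' hχ₁).trans hstep
    · rcases (ih hω' hχ₁).mul_simple_or j with h | h
      · rw [wordProd_append, wordProd_singleton]
        exact h.trans hstep
      · rwa [wordProd_append, wordProd_singleton, wordProd_append, wordProd_singleton]

theorem exists_sublist_of_bruhatLE {x w : W} (h : cs.bruhatLE x w) {ω : List B} (hω : π ω = w) :
    ∃ χ, χ <+ ω ∧ π χ = x := by
  obtain ⟨ω₀, rfl, hω₀, χ₀, hχ₀, rfl⟩ := h
  exact (cs.reflectionChain_wordProd_of_sublist hω₀ hχ₀).exists_sublist hω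

theorem isReduced_append_singleton {ω : List B} {j : B} (hω : cs.IsReduced ω)
    (h : ℓ (π ω) < ℓ (π ω * s j)) : cs.IsReduced (ω ++ [j]) := by
  have := hω.eq
  unfold IsReduced
  rw [wordProd_append, wordProd_singleton, length_append, length_singleton]
  rcases cs.length_mul_simple (π ω) j with h' | h' <;> omega

theorem bruhatLE_mul_simple {x v : W} {j : B} (hv : ℓ v < ℓ (v * s j))
    (hx : cs.bruhatLE x v) : cs.bruhatLE x (v * s j) := by
  obtain ⟨ω, rfl, hω, χ, hχ, rfl⟩ := hx
  exact ⟨ω ++ [j], by simp [wordProd_append], cs.isReduced_append_singleton hω hv, χ,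
    hχ.trans (sublist_append_left ω [j]), rfl⟩

theorem mul_simple_bruhatLE_mul_simple {x v : W} {j : B} (hv : ℓ v < ℓ (v * s j))
    (hx : cs.bruhatLE x v) : cs.bruhatLE (x * s j) (v * s j) := by
  obtain ⟨ω, rfl, hω, χ, hχ, rfl⟩ := hx
  exact ⟨ω ++ [j], by simp [wordProd_append], cs.isReduced_append_singleton hω hv, χ ++ [j],
    hχ.append (Sublist.refl [j]), by simp [wordProd_append]⟩

theorem mul_simple_bruhatLE_of_length_lt {x v : W} {j : B} (hx : cs.bruhatLE x v)
    (h : ℓ (x * s j) < ℓ x) : cs.bruhatLE (x * s j) v := by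
  obtain ⟨ω, rfl, hω, χ, hχ, rfl⟩ := hx
  obtain ⟨χ', hχ', hπ⟩ := cs.exists_sublist_wordProd_eq_mul (cs.isReflection_simple j) h
  exact ⟨ω, rfl, hω, χ', hχ'.trans hχ, hπ⟩

theorem bruhatLE_mul_simple_or {x v : W} (hx : cs.bruhatLE x v) (j : B) :
    cs.bruhatLE x (v * s j) ∨ (ℓ (x * s j) < ℓ x ∧ cs.bruhatLE (x * s j) (v * s j)) := by
  rcases lt_or_gt_of_ne (cs.length_mul_simple_ne v j) with hv | hv
  · obtain ⟨ζ, hζ, hζv⟩ := cs.exists_isReduced (v * s j)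
    have hv' : π (ζ ++ [j]) = v := by
      rw [wordProd_append, wordProd_singleton, ← hζv, simple_mul_simple_cancel_right]
    obtain ⟨χ, hχ, rfl⟩ := cs.exists_sublist_of_bruhatLE hx hv'
    obtain ⟨χ₁, χ₂, rfl, hχ₁, hχ₂⟩ := sublist_append_iff.mp hχ
    have hle : cs.bruhatLE (π χ₁) (π ζ) := ⟨ζ, rfl, hζ, χ₁, hχ₁, rfl⟩
    rw [hζv]
    rcases sublist_singleton.mp hχ₂ with rfl | rfl
    · exact Or.inl (by rwa [append_nil])
    rw [wordProd_append, wordProd_singleton, simple_mul_simple_cancel_right]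
    rcases lt_or_gt_of_ne (cs.length_mul_simple_ne (π χ₁) j) with hlt | hlt
    · exact Or.inl (by simpa using cs.mul_simple_bruhatLE_of_length_lt hle hlt)
    · exact Or.inr ⟨hlt, hle⟩
  · exact Or.inl (cs.bruhatLE_mul_simple hv hx)

theorem bruhatLE_inv {x v : W} (hx : cs.bruhatLE x v) : cs.bruhatLE x⁻¹ v⁻¹ := by
  obtain ⟨ω, rfl, hω, χ, hχ, rfl⟩ := hx
  exact ⟨ω.reverse, cs.wordProd_reverse ω, hω.reverse, χ.reverse, hχ.reverse,
    cs.wordProd_reverse χ⟩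

theorem bruhatLE_inv_iff {x v : W} : cs.bruhatLE x⁻¹ v⁻¹ ↔ cs.bruhatLE x v :=
  ⟨fun h => by simpa using cs.bruhatLE_inv h, cs.bruhatLE_inv⟩

theorem length_inv_lt_length_inv_mul_simple {v : W} {i : B} (hv : ℓ v < ℓ (s i * v)) :
    ℓ v⁻¹ < ℓ (v⁻¹ * s i) := by
  rwa [← cs.inv_simple i, ← mul_inv_rev, length_inv, length_inv]

theorem bruhatLE_simple_mul {x v : W} {i : B} (hv : ℓ v < ℓ (s i * v))
    (hx : cs.bruhatLE x v) : cs.bruhatLE x (s i * v) := by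
  rw [← bruhatLE_inv_iff, mul_inv_rev, inv_simple]
  exact cs.bruhatLE_mul_simple (cs.length_inv_lt_length_inv_mul_simple hv) (cs.bruhatLE_inv hx)

theorem simple_mul_bruhatLE_simple_mul {x v : W} {i : B} (hv : ℓ v < ℓ (s i * v))
    (hx : cs.bruhatLE x v) : cs.bruhatLE (s i * x) (s i * v) := by
  rw [← bruhatLE_inv_iff, mul_inv_rev, mul_inv_rev, inv_simple]
  exact cs.mul_simple_bruhatLE_mul_simple (cs.length_inv_lt_length_inv_mul_simple hv)
    (cs.bruhatLE_inv hx)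

theorem bruhatLE_simple_mul_or {x v : W} (hx : cs.bruhatLE x v) (i : B) :
    cs.bruhatLE x (s i * v) ∨ (ℓ (s i * x) < ℓ x ∧ cs.bruhatLE (s i * x) (s i * v)) := by
  have hinv (y : W) : (s i * y)⁻¹ = y⁻¹ * s i := by rw [mul_inv_rev, inv_simple]
  rw [← bruhatLE_inv_iff, ← bruhatLE_inv_iff (x := s i * x), ← length_inv cs (s i * x),
    ← length_inv cs x, hinv, hinv]
  exact cs.bruhatLE_mul_simple_or (cs.bruhatLE_inv hx) i

theorem simple_mul_mul_simple_eq_self {w : W} {i j : B} (hi : ℓ w < ℓ (s i * w))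
    (hj : ℓ w < ℓ (w * s j)) (h : ℓ (s i * w * s j) ≤ ℓ w) : s i * w * s j = w := by
  rcases cs.length_mul_lt_or_of_length_mul_mul_lt (cs.isReflection_simple j) (u := s i) (v := w)
    (by omega) with h' | h'
  · omega
  · rwa [length_simple, Nat.lt_one_iff, length_eq_zero_iff, ← mul_assoc, ← mul_assoc,
      mul_inv_eq_one] at h'

theorem length_simple_mul_mul_simple_le {x : W} {i j : B}
    (h : ℓ (x * s j) < ℓ x ∨ ℓ (s i * x) < ℓ x) : ℓ (s i * x * s j) ≤ ℓ x := by
  have h₁ := cs.length_mul_le (s i) (x * s j)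
  have h₂ := cs.length_mul_le (s i * x) (s j)
  rw [length_simple, ← mul_assoc] at h₁
  rw [length_simple] at h₂
  omega

theorem bruhatLE_or_of_bruhatLE_simple_mul_mul_simple {x w : W} {i j : B}
    (hlen : ℓ (s i * w * s j) ≤ ℓ w) (hx : cs.bruhatLE x (s i * w * s j)) :
    cs.bruhatLE x w ∨ (ℓ (s i * x * s j) ≤ ℓ x ∧ cs.bruhatLE (s i * x * s j) w) := by
  rcases lt_or_gt_of_ne (cs.length_simple_mul_ne w i) with hi | hi
  · have hw : ℓ (s i * w) < ℓ (s i * (s i * w)) := by rwa [simple_mul_simple_cancel_left]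
    rcases cs.bruhatLE_mul_simple_or hx j with h | ⟨hlt, h⟩ <;>
      rw [simple_mul_simple_cancel_right] at h
    · left
      simpa using cs.bruhatLE_simple_mul hw h
    · right
      refine ⟨cs.length_simple_mul_mul_simple_le (Or.inl hlt), ?_⟩
      simpa [mul_assoc] using cs.simple_mul_bruhatLE_simple_mul hw h
  rcases lt_or_gt_of_ne (cs.length_mul_simple_ne w j) with hj | hj
  · have hw : ℓ (w * s j) < ℓ (w * s j * s j) := by rwa [simple_mul_simple_cancel_right]
    rcases cs.bruhatLE_simple_mul_or hx i with h | ⟨hlt, h⟩ <;>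
      rw [mul_assoc, simple_mul_simple_cancel_left] at h
    · left
      simpa using cs.bruhatLE_mul_simple hw h
    · right
      refine ⟨cs.length_simple_mul_mul_simple_le (Or.inr hlt), ?_⟩
      simpa using cs.mul_simple_bruhatLE_mul_simple hw h
  · left
    rwa [cs.simple_mul_mul_simple_eq_self hi hj hlen] at hx

end CoxeterSystem

theorem sigmaConj.mul_mul_inv {W : Type*} [Group W] {σ : W ≃* W} {y x : W} (h : sigmaConj σ y x)
    (g : W) : sigmaConj σ (g * y * (σ g)⁻¹) x := by
  obtain ⟨u, rfl⟩ := h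
  exact ⟨g * u, by rw [map_mul, mul_inv_rev]; group⟩

theorem minLenIn.of_length_le {B W : Type*} [Group W] {M : CoxeterMatrix B}
    {cs : CoxeterSystem M W} {σ : W ≃* W} {o x y : W} (hx : minLenIn cs σ o x)
    (hy : sigmaConj σ y o) (hlen : cs.length y ≤ cs.length x) : minLenIn cs σ o y :=
  ⟨hy, fun z hz => hlen.trans (hx.2 z hz)⟩

/-- One-step monotonicity of `⪯_σ`: if `w' = s w σ(s)` with `ℓ(w') ≤ ℓ(w)` (a single
twisted-conjugation step) and some minimal length element of the σ-conjugacy class `O`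
(of `o`) is `≤ w'` in Bruhat order, then some minimal length element of `O` is `≤ w`. -/
theorem preceq_step {B W : Type*} [Group W] {M : CoxeterMatrix B}
    (cs : CoxeterSystem M W) (σ : W ≃* W)
    (hσ : ∀ i : B, ∃ j : B, σ (cs.simple i) = cs.simple j)
    (o w w' : W) (i : B)
    (hstep : w' = cs.simple i * w * σ (cs.simple i))
    (hlen : cs.length w' ≤ cs.length w)
    (h : ∃ x : W, minLenIn cs σ o x ∧ cs.bruhatLE x w') :
    ∃ y : W, minLenIn cs σ o y ∧ cs.bruhatLE y w := by
  obtain ⟨j, hj⟩ := hσ i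
  obtain ⟨x, hx, hxw'⟩ := h
  subst hstep
  rw [hj] at hlen hxw'
  rcases cs.bruhatLE_or_of_bruhatLE_simple_mul_mul_simple hlen hxw' with hxw | ⟨hlx, hxw⟩
  · exact ⟨x, hx, hxw⟩
  · have hconj := hx.1.mul_mul_inv (cs.simple i)
    rw [hj, cs.inv_simple] at hconj
    exact ⟨_, hx.of_length_le hconj hlx, hxw⟩
end

section
/- Let (W,S) be a Coxeter system with automorphism σ fixing S setwise, and let O be a σ-conjugacy class such that every element w of O satisfies: w is of minimal length in O if and only if w is minimal in O with respect to the Bruhat order. Deduce this equivalence assuming Proposition: for w →_σ w' a single step and O ⪯_σ w' one has O ⪯_σ w, and assuming every element of O can be brought to a minimal length element by →_σ. -/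
/-- One step of length-nonincreasing σ-twisted conjugation by a simple reflection. -/
def CoxeterSystem.sigmaStep {B W : Type*} [Group W] {M : CoxeterMatrix B}
    (cs : CoxeterSystem M W) (σ : W ≃* W) (w w' : W) : Prop :=
  ∃ i : B, w' = cs.simple i * w * σ (cs.simple i) ∧ cs.length w' ≤ cs.length w

/-- `O ⪯_σ w`: some minimal length element of the σ-conjugacy class of `o` is `≤ w`. -/
def preceq {B W : Type*} [Group W] {M : CoxeterMatrix B} (cs : CoxeterSystem M W)
    (σ : W ≃* W) (o w : W) : Prop :=
  ∃ x : W, minLenIn cs σ o x ∧ cs.bruhatLE x w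

/-!
If `v` has minimal length in `O`, then any `x ≤ v` in `O` comes from a subword of a reduced word
of `v` that is at least as long as that word, hence is the whole word, and `x = v`.
Conversely, reduce `v` by `→_σ` steps to a minimal length element `w'`; trivially `O ⪯_σ w'`, and
one-step monotonicity carries this back along the chain to `O ⪯_σ v`. The minimal length element
below `v` so obtained must be `v` itself when `v` is Bruhat-minimal in `O`.
-/

namespace CoxeterSystem

variable {B W : Type*} [Group W] {M : CoxeterMatrix B} (cs : CoxeterSystem M W)

theorem bruhatLE_refl (w : W) : cs.bruhatLE w w := by
  obtain ⟨ω, hω_red, rfl⟩ := cs.exists_isReduced w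
  exact ⟨ω, rfl, hω_red, ω, List.Sublist.refl ω, rfl⟩

theorem eq_of_bruhatLE_of_length_le {x v : W} (hxv : cs.bruhatLE x v)
    (hlen : cs.length v ≤ cs.length x) : x = v := by
  obtain ⟨ω, rfl, hω_red, ω', hsub, rfl⟩ := hxv
  have hω'_len : ω'.length = ω.length :=
    le_antisymm hsub.length_le (hω_red ▸ hlen.trans (cs.length_wordProd_le ω'))
  rw [hsub.eq_of_length hω'_len]

end CoxeterSystem

section

variable {B W : Type*} [Group W] {M : CoxeterMatrix B} (cs : CoxeterSystem M W) (σ : W ≃* W)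

theorem preceq_of_minLenIn {o w : W} (hw : minLenIn cs σ o w) : preceq cs σ o w :=
  ⟨w, hw, cs.bruhatLE_refl w⟩

theorem preceq_of_reflTransGen {o : W}
    (hmono : ∀ w w' : W, cs.sigmaStep σ w w' → preceq cs σ o w' → preceq cs σ o w)
    {v w' : W} (hchain : Relation.ReflTransGen (cs.sigmaStep σ) v w')
    (hw' : minLenIn cs σ o w') : preceq cs σ o v :=
  hchain.head_induction_on (preceq_of_minLenIn cs σ hw')
    fun hstep _ hpre => hmono _ _ hstep hpre

end

theorem min_length_iff_bruhat_minimal_general {B W : Type*} [Group W] {M : CoxeterMatrix B}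
    (cs : CoxeterSystem M W) (σ : W ≃* W)
    (hred : ∀ o w : W, sigmaConj σ w o →
      ∃ w' : W, minLenIn cs σ o w' ∧ Relation.ReflTransGen (cs.sigmaStep σ) w w')
    (hmono : ∀ o' w w' : W, cs.sigmaStep σ w w' → preceq cs σ o' w' → preceq cs σ o' w)
    (o v : W) (hv : sigmaConj σ v o) :
    (∀ y : W, sigmaConj σ y o → cs.length v ≤ cs.length y) ↔
      ¬ ∃ x : W, sigmaConj σ x o ∧ cs.bruhatLE x v ∧ x ≠ v := by
  constructor
  · rintro hmin ⟨x, hx, hxv, hne⟩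
    exact hne (cs.eq_of_bruhatLE_of_length_le hxv (hmin x hx))
  · intro hbruhat_min
    obtain ⟨w', hw'_min, hchain⟩ := hred o v hv
    obtain ⟨x, hx_min, hxv⟩ := preceq_of_reflTransGen cs σ (hmono o) hchain hw'_min
    have hx_eq : x = v := by
      by_contra hne
      exact hbruhat_min ⟨x, hx_min.1, hxv, hne⟩
    exact hx_eq ▸ hx_min.2

/-- Corollary 2.8: assuming (i) every element of a σ-conjugacy class can be brought to a
minimal length element by `→_σ`, and (ii) the one-step monotonicity of `⪯_σ`,
an element `v` of the class `O` of `o` has minimal length in `O` if and only if `v` is a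
minimal element of `O` with respect to the Bruhat order. -/
theorem min_length_iff_bruhat_minimal {B W : Type*} [Group W] {M : CoxeterMatrix B}
    (cs : CoxeterSystem M W) (σ : W ≃* W)
    (hσ : ∀ i : B, ∃ j : B, σ (cs.simple i) = cs.simple j)
    (hred : ∀ o w : W, sigmaConj σ w o →
      ∃ w' : W, minLenIn cs σ o w' ∧ Relation.ReflTransGen (cs.sigmaStep σ) w w')
    (hmono : ∀ o' w w' : W, cs.sigmaStep σ w w' → preceq cs σ o' w' → preceq cs σ o' w)
    (o v : W) (hv : sigmaConj σ v o) :
    (∀ y : W, sigmaConj σ y o → cs.length v ≤ cs.length y) ↔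
      ¬ ∃ x : W, sigmaConj σ x o ∧ cs.bruhatLE x v ∧ x ≠ v :=
  min_length_iff_bruhat_minimal_general cs σ hred hmono o v hv
end

section
/- Admissibility of twisted powers: let W̃ be an extended affine Weyl group with σ as above, μ dominant, and suppose w ∈ Adm(μ). Assume σ(Adm(ν)) = Adm(σ₀(ν)) for all dominant ν (where σ = τ∘σ₀, τ(Adm)=Adm) and assume the additivity Adm(μ)Adm(μ') = Adm(μ+μ'). Then for n divisible by the orders involved, w·σ(w)·σ²(w)⋯σ^{n−1}(w) ∈ Adm(μ + σ₀(μ) + ⋯ + σ₀^{n−1}(μ)) = Adm(nμ^◇), and hence the translation (wσ)^n = t^λ satisfies λ̄ ≤ nμ^◇ in dominance order; consequently ν̄_{w,σ} ≤ μ^◇. -/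
/-- The σ-twisted power `w σ(w) σ²(w) ⋯ σ^{n−1}(w)`. -/
def twPow {Wt : Type*} [Group Wt] (σ : MulAut Wt) (w : Wt) : ℕ → Wt
  | 0 => 1
  | n + 1 => twPow σ w n * (σ ^ n) w

/-- Dominance order, integrally: a positive multiple of `y − x` is an ℕ-combination of
the positive coroots `C`. -/
def domLE {X : Type*} [AddCommGroup X] (C : Finset X) (x y : X) : Prop :=
  ∃ m : ℕ, 0 < m ∧ m • (y - x) ∈ AddSubmonoid.closure (C : Set X)

/-!
Induct on the number of factors. Since `σ` carries `Adm(ν)` into `Adm(σ₀ ν)` and `σ₀` preserves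
dominance, `σ^k(w) ∈ Adm(σ₀^k μ)`; additivity of admissible sets then passes from
`w σ(w) ⋯ σ^{k-1}(w) ∈ Adm(μ + ⋯ + σ₀^{k-1} μ)` to `k + 1` factors. When the twisted power is a
translation `t^λ`, the dominance inequality is the hypothesis on translations in `Adm`.
-/

namespace TwistedPower

variable {X Wt : Type*} [AddCommGroup X]

def Dominant (P : Finset (X →+ ℤ)) (ν : X) : Prop :=
  ∀ α ∈ P, 0 ≤ α ν

/-- The paper's `Adm(ν)`, with `G` in the role of the finite Weyl group `W₀`. -/
def Adm (t : X → Wt) (le : Wt → Wt → Prop) (G : Type*) [SMul G X] (ν : X) : Set Wt :=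
  {w | ∃ g : G, le w (t (g • ν))}

variable {P : Finset (X →+ ℤ)}

theorem Dominant.sum {ι : Type*} {s : Finset ι} {f : ι → X}
    (h : ∀ i ∈ s, Dominant P (f i)) : Dominant P (∑ i ∈ s, f i) := fun α hα => by
  rw [map_sum]
  exact Finset.sum_nonneg fun i hi => h i hi α hα

theorem Dominant.nsmul_addAut {σ₀ : AddAut X}
    (hσ₀ : ∀ ν, Dominant P ν → Dominant P (σ₀ ν)) {ν : X} (hν : Dominant P ν) :
    ∀ i : ℕ, Dominant P ((i • σ₀) ν)
  | 0 => by simpa using hν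
  | i + 1 => by
    rw [succ_nsmul', AddAut.add_apply]
    exact hσ₀ _ (Dominant.nsmul_addAut hσ₀ hν i)

variable [Group Wt] {t : X → Wt} {le : Wt → Wt → Prop} {G : Type*} [SMul G X]
  {σ : MulAut Wt} {σ₀ : AddAut X}

theorem pow_apply_mem_adm
    (hσ₀ : ∀ ν, Dominant P ν → Dominant P (σ₀ ν))
    (hσ : ∀ ν, Dominant P ν → ∀ w ∈ Adm t le G ν, σ w ∈ Adm t le G (σ₀ ν))
    {μ : X} (hμ : Dominant P μ) {w : Wt} (hw : w ∈ Adm t le G μ) :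
    ∀ i : ℕ, (σ ^ i) w ∈ Adm t le G ((i • σ₀) μ)
  | 0 => by simpa using hw
  | i + 1 => by
    rw [pow_succ', MulAut.mul_apply, succ_nsmul', AddAut.add_apply]
    exact hσ _ (hμ.nsmul_addAut hσ₀ i) _ (pow_apply_mem_adm hσ₀ hσ hμ hw i)

theorem twPow_succ_mem_adm
    (hσ₀ : ∀ ν, Dominant P ν → Dominant P (σ₀ ν))
    (hσ : ∀ ν, Dominant P ν → ∀ w ∈ Adm t le G ν, σ w ∈ Adm t le G (σ₀ ν))
    (hadd : ∀ ν ν', Dominant P ν → Dominant P ν' →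
      ∀ a ∈ Adm t le G ν, ∀ b ∈ Adm t le G ν', a * b ∈ Adm t le G (ν + ν'))
    {μ : X} (hμ : Dominant P μ) {w : Wt} (hw : w ∈ Adm t le G μ) :
    ∀ k : ℕ, twPow σ w (k + 1) ∈ Adm t le G (∑ i ∈ Finset.range (k + 1), (i • σ₀) μ)
  | 0 => by simpa [twPow] using hw
  | k + 1 => by
    rw [twPow, Finset.sum_range_succ _ (k + 1)]
    exact hadd _ _ (.sum fun i _ => hμ.nsmul_addAut hσ₀ i) (hμ.nsmul_addAut hσ₀ _) _
      (twPow_succ_mem_adm hσ₀ hσ hadd hμ hw k) _ (pow_apply_mem_adm hσ₀ hσ hμ hw _)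

end TwistedPower

open TwistedPower in
theorem twisted_power_admissible_general
    {X : Type*} [AddCommGroup X] {G : Type*} [Group G] [DistribMulAction G X]
    (P : Finset (X →+ ℤ)) (C : Finset X)
    {Wt : Type*} [Group Wt] (t : X → Wt)
    (le : Wt → Wt → Prop)
    (σ : MulAut Wt) (σ₀ : AddAut X)
    (hσ₀dom : ∀ nu : X, (∀ α ∈ P, 0 ≤ α nu) → (∀ α ∈ P, 0 ≤ α (σ₀ nu)))
    -- σ(Adm(ν)) = Adm(σ₀(ν)) for dominant ν
    (hσAdm : ∀ nu : X, (∀ α ∈ P, 0 ≤ α nu) → ∀ w : Wt,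
      (∃ g : G, le w (t (g • nu))) ↔ ∃ g : G, le (σ w) (t (g • σ₀ nu)))
    -- additivity: Adm(ν)·Adm(ν') = Adm(ν+ν') for dominant ν, ν'
    (hadd : ∀ nu nu' : X, (∀ α ∈ P, 0 ≤ α nu) → (∀ α ∈ P, 0 ≤ α nu') →
      ∀ z : Wt, (∃ g : G, le z (t (g • (nu + nu')))) ↔
        ∃ a b : Wt, z = a * b ∧ (∃ g : G, le a (t (g • nu))) ∧
          (∃ g : G, le b (t (g • nu'))))
    -- t^λ ∈ Adm(ν) implies λ̄ ≤ ν in dominance order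
    (htAdm : ∀ (lam nu : X), (∀ α ∈ P, 0 ≤ α nu) →
      (∃ g : G, le (t lam) (t (g • nu))) →
      ∀ d : X, (∀ α ∈ P, 0 ≤ α d) → (∃ g : G, d = g • lam) → domLE C d nu)
    (mu : X) (hmu : ∀ α ∈ P, 0 ≤ α mu)
    (w : Wt) (hw : ∃ g : G, le w (t (g • mu)))
    (n : ℕ) (hn : 0 < n) :
    (∃ g : G, le (twPow σ w n) (t (g • (∑ i ∈ Finset.range n, (i • σ₀) mu)))) ∧
    (∀ lam : X, twPow σ w n = t lam →
      ∀ d : X, (∀ α ∈ P, 0 ≤ α d) → (∃ g : G, d = g • lam) →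
        domLE C d (∑ i ∈ Finset.range n, (i • σ₀) mu)) := by
  obtain ⟨k, rfl⟩ := Nat.exists_eq_add_one.mpr hn
  have hadm : twPow σ w (k + 1) ∈ Adm t le G (∑ i ∈ Finset.range (k + 1), (i • σ₀) mu) :=
    twPow_succ_mem_adm hσ₀dom (fun ν hν w hw => (hσAdm ν hν w).mp hw)
      (fun ν ν' hν hν' a ha b hb => (hadd ν ν' hν hν' _).mpr ⟨a, b, rfl, ha, hb⟩) hmu hw k
  refine ⟨hadm, fun lam hlam => htAdm lam _ (Dominant.sum fun i _ => Dominant.nsmul_addAut hσ₀dom hmu i) ?_⟩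
  rwa [← hlam]

/-- Admissibility of twisted powers (core of Mazur's inequality): if `w ∈ Adm(μ)`,
`σ(Adm(ν)) = Adm(σ₀(ν))` for dominant `ν`, and `Adm(ν)Adm(ν') = Adm(ν+ν')`, then
`w σ(w) ⋯ σ^{n−1}(w) ∈ Adm(μ + σ₀(μ) + ⋯ + σ₀^{n−1}(μ)) = Adm(n μ^◇)`; hence if this
twisted power is the translation `t^λ`, the dominant representative of `λ` is
`≤ n μ^◇ = Σ_{i<n} σ₀^i(μ)` in the dominance order (so `ν̄_{w,σ} ≤ μ^◇`). -/
theorem twisted_power_admissible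
    {X : Type*} [AddCommGroup X] {G : Type*} [Group G] [DistribMulAction G X]
    (P : Finset (X →+ ℤ)) (C : Finset X)
    {Wt : Type*} [Group Wt] (t : X → Wt) (ht : ∀ a b : X, t (a + b) = t a * t b)
    (le : Wt → Wt → Prop) [IsPartialOrder Wt le]
    (σ : MulAut Wt) (σ₀ : AddAut X)
    (hσ₀dom : ∀ nu : X, (∀ α ∈ P, 0 ≤ α nu) → (∀ α ∈ P, 0 ≤ α (σ₀ nu)))
    -- σ(Adm(ν)) = Adm(σ₀(ν)) for dominant ν
    (hσAdm : ∀ nu : X, (∀ α ∈ P, 0 ≤ α nu) → ∀ w : Wt,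
      (∃ g : G, le w (t (g • nu))) ↔ ∃ g : G, le (σ w) (t (g • σ₀ nu)))
    -- additivity: Adm(ν)·Adm(ν') = Adm(ν+ν') for dominant ν, ν'
    (hadd : ∀ nu nu' : X, (∀ α ∈ P, 0 ≤ α nu) → (∀ α ∈ P, 0 ≤ α nu') →
      ∀ z : Wt, (∃ g : G, le z (t (g • (nu + nu')))) ↔
        ∃ a b : Wt, z = a * b ∧ (∃ g : G, le a (t (g • nu))) ∧
          (∃ g : G, le b (t (g • nu'))))
    -- t^λ ∈ Adm(ν) implies λ̄ ≤ ν in dominance order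
    (htAdm : ∀ (lam nu : X), (∀ α ∈ P, 0 ≤ α nu) →
      (∃ g : G, le (t lam) (t (g • nu))) →
      ∀ d : X, (∀ α ∈ P, 0 ≤ α d) → (∃ g : G, d = g • lam) → domLE C d nu)
    (mu : X) (hmu : ∀ α ∈ P, 0 ≤ α mu)
    (w : Wt) (hw : ∃ g : G, le w (t (g • mu)))
    (n : ℕ) (hn : 0 < n) (hdvd : orderOf σ ∣ n) (hdvd₀ : addOrderOf σ₀ ∣ n) :
    (∃ g : G, le (twPow σ w n) (t (g • (∑ i ∈ Finset.range n, (i • σ₀) mu)))) ∧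
    (∀ lam : X, twPow σ w n = t lam →
      ∀ d : X, (∀ α ∈ P, 0 ≤ α d) → (∃ g : G, d = g • lam) →
        domLE C d (∑ i ∈ Finset.range n, (i • σ₀) mu)) :=
  twisted_power_admissible_general P C t le σ σ₀ hσ₀dom hσAdm hadd htAdm mu hmu w hw n hn
end
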